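/- arXiv:2011.06262 — 6 statements merged into one kernel-verified Lean document; each statement's English description precedes it below -/
import Mathlib

section
/- Let S be a finite semigroup that is aperiodic (i.e., for every s ∈ S there exists n with s^n = s^{n+1}) and satisfies the identity e·a·f·u·e·b·f = e·b·f·u·e·a·f for all idempotents e, f ∈ S and all a, u, b ∈ S. Let S act on the right on a finite set Q. If a point t ∈ Q satisfies t·e = t for some idempotent e ∈ S, and also t = s·x and s = t·y for some s ∈ Q and x, y ∈ S (i.e., t and s are mutually reachable under the action) with s·e = s, then t = s. -/
/-!
Put `a = e y e` and `b = e x e`; since `e` fixes both points, `t · a = s` and `s · b = t`. The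
identity with `f = u = e` makes `a` and `b` commute, so `t` is fixed by every power of `a b`.
Aperiodicity `aⁿ = aⁿ⁺¹` gives `(a b)ⁿ a = aⁿ⁺¹ bⁿ = (a b)ⁿ`, hence `t · a = t`, i.e. `s = t`.
-/

/-- `spow s n` is the (n+1)-st power of `s` in a semigroup: `spow s 0 = s`. -/
def spow {S : Type*} [Semigroup S] (s : S) : ℕ → S
  | 0 => s
  | n + 1 => spow s n * s

section Spow

variable {S : Type*} [Semigroup S] {a b : S}

theorem Commute.spow_left (h : Commute a b) : ∀ n, Commute (spow a n) b
  | 0 => h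
  | n + 1 => (h.spow_left n).mul_left h

theorem Commute.spow_mul (h : Commute a b) : ∀ n, spow (a * b) n = spow a n * spow b n
  | 0 => rfl
  | n + 1 => by
    show spow (a * b) n * (a * b) = spow a n * a * (spow b n * b)
    rw [h.spow_mul n, mul_assoc, mul_assoc, ← mul_assoc (spow b n), (h.symm.spow_left n).eq,
      mul_assoc]

theorem Commute.spow_mul_mul_left_eq (h : Commute a b) {n : ℕ} (hn : spow a n = spow a (n + 1)) :
    spow (a * b) n * a = spow (a * b) n := by
  rw [h.spow_mul, mul_assoc, (h.symm.spow_left n).eq, ← mul_assoc]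
  exact congrArg (· * spow b n) hn.symm

end Spow

section Action

variable {S Q : Type*} [Semigroup S] (act : Q → S → Q)
  (hact : ∀ q s t, act (act q s) t = act q (s * t))
include hact

theorem act_spow_of_act_eq {t : Q} {c : S} (h : act t c = t) : ∀ n, act t (spow c n) = t
  | 0 => h
  | n + 1 => by
    show act t (spow c n * c) = t
    rw [← hact, act_spow_of_act_eq h n, h]

theorem act_eq_of_act_mul_eq_of_commute {a b : S} (hab : Commute a b) {n : ℕ}
    (hn : spow a n = spow a (n + 1)) {t : Q} (ht : act t (a * b) = t) : act t a = t := by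
  have hfix := act_spow_of_act_eq act hact ht n
  calc act t a = act (act t (spow (a * b) n)) a := by rw [hfix]
    _ = act t (spow (a * b) n) := by rw [hact, hab.spow_mul_mul_left_eq hn]
    _ = t := hfix

end Action

theorem commute_mul_mul_of_idempotent {S : Type*} [Semigroup S] {e : S} (he : e * e = e)
    (hid : ∀ a b : S, e * a * e * e * e * b * e = e * b * e * e * e * a * e) (x y : S) :
    Commute (e * x * e) (e * y * e) := by
  have he' : ∀ z, e * (e * z) = e * z := fun z => by rw [← mul_assoc, he]
  have h := hid x y
  simp only [mul_assoc, he'] at h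
  simpa only [Commute, SemiconjBy, mul_assoc, he'] using h

theorem stmt0_general {S Q : Type*} [Semigroup S]
    (act : Q → S → Q)
    (hact : ∀ q s t, act (act q s) t = act q (s * t))
    (haper : ∀ s : S, ∃ n : ℕ, spow s n = spow s (n + 1))
    (hid : ∀ e f a u b : S, e * e = e → f * f = f →
      e * a * f * u * e * b * f = e * b * f * u * e * a * f)
    (t s : Q) (e : S) (he : e * e = e)
    (hte : act t e = t) (hse : act s e = s)
    (x y : S) (hsx : act s x = t) (hty : act t y = s) :
    t = s := by
  have hsa : act t (e * y * e) = s := by rw [← hact, ← hact, hte, hty, hse]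
  have htb : act s (e * x * e) = t := by rw [← hact, ← hact, hse, hsx, hte]
  have hcomm := commute_mul_mul_of_idempotent he (fun a b => hid e e a e b he he) y x
  obtain ⟨n, hn⟩ := haper (e * y * e)
  have hfix : act t (e * y * e) = t :=
    act_eq_of_act_mul_eq_of_commute act hact hcomm hn (by rw [← hact, hsa, htb])
  rw [← hsa, hfix]

theorem stmt0 {S Q : Type*} [Semigroup S] [Fintype S] [Fintype Q]
    (act : Q → S → Q)
    (hact : ∀ q s t, act (act q s) t = act q (s * t))
    (haper : ∀ s : S, ∃ n : ℕ, spow s n = spow s (n + 1))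
    (hid : ∀ e f a u b : S, e * e = e → f * f = f →
      e * a * f * u * e * b * f = e * b * f * u * e * a * f)
    (t s : Q) (e : S) (he : e * e = e)
    (hte : act t e = t) (hse : act s e = s)
    (x y : S) (hsx : act s x = t) (hty : act t y = s) :
    t = s :=
  stmt0_general act hact haper hid t s e he hte hse x y hsx hty
end

section
/- Let S be a finite semigroup satisfying eafuebf = ebfueaf for all idempotents e, f and all elements a, u, b, acting on the right on a set Q. Suppose q, t₁, t₂ ∈ Q satisfy: q·e = q and t₁·e = t₁ for some idempotent e ∈ S; q·i = q and t₂·i = t₂ for some idempotent i ∈ S; q·a = q and t₁·a = t₂ for some a ∈ S; and q·b = t₁ for some b ∈ S. Then t₂·e = t₁, and hence t₁ and t₂ are mutually reachable (t₁·a = t₂ and t₂·e = t₁). -/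
/-!
Specialising the identity to `e = f = u` shows that the corner `e S e` is commutative. Reading
`t₂·e` as `q·(ebe)(eae)` and `t₁` as `q·(eae)(ebe)`, commuting the two factors gives `t₂·e = t₁`.
-/

theorem Semigroup.corner_mul_comm {S : Type*} [Semigroup S]
    (hid : ∀ e f a u b : S, e * e = e → f * f = f →
      e * a * f * u * e * b * f = e * b * f * u * e * a * f)
    {e : S} (he : e * e = e) (a b : S) :
    e * a * e * (e * b * e) = e * b * e * (e * a * e) := by
  have he' : ∀ x : S, e * (e * x) = e * x := fun x => by rw [← mul_assoc, he]
  have h := hid e e a e b he he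
  simp only [mul_assoc, he'] at h ⊢
  exact h

theorem stmt1_general {S Q : Type*} [Semigroup S]
    (act : Q → S → Q)
    (hact : ∀ q s t, act (act q s) t = act q (s * t))
    (hid : ∀ e f a u b : S, e * e = e → f * f = f →
      e * a * f * u * e * b * f = e * b * f * u * e * a * f)
    (q t₁ t₂ : Q) (e a b : S)
    (he : e * e = e)
    (hqe : act q e = q) (ht1e : act t₁ e = t₁)
    (hqa : act q a = q) (ht1a : act t₁ a = t₂)
    (hqb : act q b = t₁) :
    act t₂ e = t₁ := by
  have hbeae : act q (e * b * e * (e * a * e)) = act t₂ e := by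
    simp only [← hact, hqe, hqb, ht1e, ht1a]
  have haebe : act q (e * a * e * (e * b * e)) = t₁ := by
    simp only [← hact, hqe, hqa, hqb, ht1e]
  rw [← hbeae, ← Semigroup.corner_mul_comm hid he, haebe]

theorem stmt1 {S Q : Type*} [Semigroup S] [Fintype S]
    (act : Q → S → Q)
    (hact : ∀ q s t, act (act q s) t = act q (s * t))
    (hid : ∀ e f a u b : S, e * e = e → f * f = f →
      e * a * f * u * e * b * f = e * b * f * u * e * a * f)
    (q t₁ t₂ : Q) (e i a b : S)
    (he : e * e = e) (hi : i * i = i)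
    (hqe : act q e = q) (ht1e : act t₁ e = t₁)
    (hqi : act q i = q) (ht2i : act t₂ i = t₂)
    (hqa : act q a = q) (ht1a : act t₁ a = t₂)
    (hqb : act q b = t₁) :
    act t₂ e = t₁ :=
  stmt1_general act hact hid q t₁ t₂ e a b he hqe ht1e hqa ht1a hqb
end

section
/- Let S be a finite semigroup satisfying eafuebf = ebfueaf for all idempotents e, f and all elements a, u, b, acting on the right on a set Q. Suppose p, q, r, s, t₁, t₂ ∈ Q satisfy: p·e = p and s·e = s for some idempotent e; q·f = q and r·f = r for some idempotent f; q·f₁ = q and t₁·f₁ = t₁ for some idempotent f₁; q·f₂ = q and t₂·f₂ = t₂ for some idempotent f₂; p·b₁ = q, s·b₁ = t₁, p·b₂ = q, s·b₂ = t₂ for some b₁, b₂ ∈ S; p·a = r and r·u = s for some a, u ∈ S; and q reaches both t₁ and t₂ (there exist c₁, c₂ ∈ S with q·c₁ = t₁ and q·c₂ = t₂). Then t₁ and t₂ are mutually reachable: there exist x, y ∈ S with t₁·x = t₂ and t₂·y = t₁. -/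
/-!
Both `t₁` and `t₂` are sent by `f` to the same state: reading the identity
`e a f u e b f = e b f u e a f` from `p` gives `tᵢ·f = q·(f u e a f)` for `i = 1, 2`. And each `tᵢ`
returns from `tᵢ·f` along `fᵢ`: reading the identity for the idempotents `f, fᵢ` from `q`
gives `tᵢ·f·fᵢ = tᵢ`. Hence `t₁ ⟶ t₁·f = t₂·f ⟶ t₂` and symmetrically.
-/

def LocallyThresholdTestable (S : Type*) [Semigroup S] : Prop :=
  ∀ e f a u b : S, e * e = e → f * f = f →
    e * a * f * u * e * b * f = e * b * f * u * e * a * f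

section RightAction

variable {S Q : Type*} [Semigroup S]

theorem act_idem_act_eq_of_ltt (act : Q → S → Q)
    (hact : ∀ q s t, act (act q s) t = act q (s * t)) (hid : LocallyThresholdTestable S)
    {p r s : Q} {e f a u : S} (he : e * e = e) (hf : f * f = f)
    (hpe : act p e = p) (hse : act s e = s) (hpa : act p a = r) (hrf : act r f = r)
    (hru : act r u = s) (b : S) :
    act (act s b) f = act (act p b) (f * u * e * a * f) := by
  have h := congrArg (act p) (hid e f a u b he hf)
  simp only [← hact] at h ⊢
  rwa [hpe, hpa, hrf, hru, hse] at h

theorem act_idem_act_idem_eq_of_ltt (act : Q → S → Q)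
    (hact : ∀ q s t, act (act q s) t = act q (s * t)) (hid : LocallyThresholdTestable S)
    {q t : Q} {f g c : S} (hf : f * f = f) (hg : g * g = g)
    (hqf : act q f = q) (hqg : act q g = q) (htg : act t g = t) (hqc : act q c = t) :
    act (act t f) g = t := by
  have hff : act (act t f) f = act t f := by rw [hact, hf]
  have hgg : act (act (act t f) g) g = act (act t f) g := by rw [hact, hg]
  have h := congrArg (act q) (hid f g c f g hf hg)
  simp only [← hact] at h
  rwa [hqf, hqc, htg, hff, hgg, hqg, hqg, hqf, hqf, hqc, htg] at h

end RightAction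

theorem stmt3_general {S Q : Type*} [Semigroup S]
    (act : Q → S → Q)
    (hact : ∀ q s t, act (act q s) t = act q (s * t))
    (hid : ∀ e f a u b : S, e * e = e → f * f = f →
      e * a * f * u * e * b * f = e * b * f * u * e * a * f)
    (p q r s t₁ t₂ : Q) (e f f₁ f₂ a u b₁ b₂ c₁ c₂ : S)
    (he : e * e = e) (hf : f * f = f) (hf1 : f₁ * f₁ = f₁) (hf2 : f₂ * f₂ = f₂)
    (hpe : act p e = p) (hse : act s e = s)
    (hqf : act q f = q) (hrf : act r f = r)
    (hqf1 : act q f₁ = q) (ht1f1 : act t₁ f₁ = t₁)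
    (hqf2 : act q f₂ = q) (ht2f2 : act t₂ f₂ = t₂)
    (hpb1 : act p b₁ = q) (hsb1 : act s b₁ = t₁)
    (hpb2 : act p b₂ = q) (hsb2 : act s b₂ = t₂)
    (hpa : act p a = r) (hru : act r u = s)
    (hqc1 : act q c₁ = t₁) (hqc2 : act q c₂ = t₂) :
    ∃ x y : S, act t₁ x = t₂ ∧ act t₂ y = t₁ := by
  have hsame : act t₁ f = act t₂ f := by
    have key := act_idem_act_eq_of_ltt act hact hid he hf hpe hse hpa hrf hru
    rw [← hsb1, ← hsb2, key, key, hpb1, hpb2]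
  have hret₁ := act_idem_act_idem_eq_of_ltt act hact hid hf hf1 hqf hqf1 ht1f1 hqc1
  have hret₂ := act_idem_act_idem_eq_of_ltt act hact hid hf hf2 hqf hqf2 ht2f2 hqc2
  refine ⟨f * f₂, f * f₁, ?_, ?_⟩
  · rw [← hact, hsame, hret₂]
  · rw [← hact, ← hsame, hret₁]

theorem stmt3 {S Q : Type*} [Semigroup S] [Fintype S]
    (act : Q → S → Q)
    (hact : ∀ q s t, act (act q s) t = act q (s * t))
    (hid : ∀ e f a u b : S, e * e = e → f * f = f →
      e * a * f * u * e * b * f = e * b * f * u * e * a * f)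
    (p q r s t₁ t₂ : Q) (e f f₁ f₂ a u b₁ b₂ c₁ c₂ : S)
    (he : e * e = e) (hf : f * f = f) (hf1 : f₁ * f₁ = f₁) (hf2 : f₂ * f₂ = f₂)
    (hpe : act p e = p) (hse : act s e = s)
    (hqf : act q f = q) (hrf : act r f = r)
    (hqf1 : act q f₁ = q) (ht1f1 : act t₁ f₁ = t₁)
    (hqf2 : act q f₂ = q) (ht2f2 : act t₂ f₂ = t₂)
    (hpb1 : act p b₁ = q) (hsb1 : act s b₁ = t₁)
    (hpb2 : act p b₂ = q) (hsb2 : act s b₂ = t₂)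
    (hpa : act p a = r) (hru : act r u = s)
    (hqc1 : act q c₁ = t₁) (hqc2 : act q c₂ = t₂) :
    ∃ x y : S, act t₁ x = t₂ ∧ act t₂ y = t₁ :=
  stmt3_general act hact hid p q r s t₁ t₂ e f f₁ f₂ a u b₁ b₂ c₁ c₂ he hf hf1 hf2 hpe hse hqf hrf
    hqf1 ht1f1 hqf2 ht2f2 hpb1 hsb1 hpb2 hsb2 hpa hru hqc1 hqc2
end

section
/- Let S be a finite semigroup satisfying eafuebf = ebfueaf for all idempotents e, f and all elements a, u, b, acting on the right on a finite set Q, and assume additionally that whenever (x,y) ∈ Q×Q is fixed by some idempotent (x·j = x and y·j = y) and x, y are mutually reachable, then x = y. Suppose p, r₁, r₂ ∈ Q satisfy: p·e₁ = p and r₁·e₁ = r₁ for some idempotent e₁; p·e₂ = p and r₂·e₂ = r₂ for some idempotent e₂; and r₁, r₂ are mutually reachable with p reaching r₁. Then r₁·e₂ = r₂. -/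
/-!
Writing `r₁ = p · s`, the identity `e a f u e b f = e b f u e a f` with `e = e₂`, `f = e₁` shows
that `e₁` undoes `e₂` on `r₁`: `(r₁ · e₂) · e₁ = r₁`. Hence `r₁ · e₂` and `r₂` are mutually
reachable, and both are fixed by `e₂`, so condition 1 identifies them.
-/

section RightAction

variable {S Q : Type*} (act : Q → S → Q)

def Reaches (x y : Q) : Prop := x = y ∨ ∃ s, act x s = y

variable {act}

theorem Reaches.of_act (x : Q) (s : S) : Reaches act x (act x s) := Or.inr ⟨s, rfl⟩

theorem Reaches.trans [Mul S] (hact : ∀ q s t, act (act q s) t = act q (s * t)) {x y z : Q}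
    (hxy : Reaches act x y) (hyz : Reaches act y z) : Reaches act x z := by
  rcases hxy with rfl | ⟨s, rfl⟩
  · exact hyz
  rcases hyz with rfl | ⟨t, rfl⟩
  · exact .of_act x s
  · exact .inr ⟨_, (hact x s t).symm⟩

theorem act_act_eq_self_of_reaches [Mul S] (hact : ∀ q s t, act (act q s) t = act q (s * t))
    (hid : ∀ e f a u b : S, e * e = e → f * f = f →
      e * a * f * u * e * b * f = e * b * f * u * e * a * f)
    {p r : Q} {e₁ e₂ : S} (he1 : e₁ * e₁ = e₁) (he2 : e₂ * e₂ = e₂)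
    (hpe1 : act p e₁ = p) (hre1 : act r e₁ = r) (hpe2 : act p e₂ = p)
    (hpr : Reaches act p r) : act (act r e₂) e₁ = r := by
  rcases hpr with rfl | ⟨s, rfl⟩
  · rw [hpe2, hpe1]
  -- Act on `p` with both sides of `e₂ e₂ e₁ e₁ e₂ s e₁ = e₂ s e₁ e₁ e₂ e₂ e₁`.
  have h := congrArg (act p) (hid e₂ e₁ e₂ e₁ s he2 he1)
  simp only [← hact, hpe2, hpe1, hre1] at h
  rw [hact (act p s) e₂ e₂, he2] at h
  exact h.symm

end RightAction

theorem stmt4_general {S Q : Type*} [Semigroup S]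
    (act : Q → S → Q)
    (hact : ∀ q s t, act (act q s) t = act q (s * t))
    (hid : ∀ e f a u b : S, e * e = e → f * f = f →
      e * a * f * u * e * b * f = e * b * f * u * e * a * f)
    (hcond1 : ∀ (x y : Q) (j : S), j * j = j → act x j = x → act y j = y →
      (x = y ∨ ∃ s, act x s = y) → (y = x ∨ ∃ s, act y s = x) → x = y)
    (p r₁ r₂ : Q) (e₁ e₂ : S)
    (he1 : e₁ * e₁ = e₁) (he2 : e₂ * e₂ = e₂)
    (hpe1 : act p e₁ = p) (hr1e1 : act r₁ e₁ = r₁)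
    (hpe2 : act p e₂ = p) (hr2e2 : act r₂ e₂ = r₂)
    (h12 : r₁ = r₂ ∨ ∃ s, act r₁ s = r₂)
    (h21 : r₂ = r₁ ∨ ∃ s, act r₂ s = r₁)
    (hpr1 : p = r₁ ∨ ∃ s, act p s = r₁) :
    act r₁ e₂ = r₂ := by
  have hq2 : act (act r₁ e₂) e₂ = act r₁ e₂ := by rw [hact, he2]
  have hq1 : act (act r₁ e₂) e₁ = r₁ :=
    act_act_eq_self_of_reaches hact hid he1 he2 hpe1 hr1e1 hpe2 hpr1
  have hqr : Reaches act (act r₁ e₂) r₂ :=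
    (Reaches.of_act _ e₁).trans hact (by rw [hq1]; exact h12)
  have hrq : Reaches act r₂ (act r₁ e₂) := Reaches.trans hact h21 (.of_act r₁ e₂)
  exact hcond1 _ r₂ e₂ he2 hq2 hr2e2 hqr hrq

theorem stmt4 {S Q : Type*} [Semigroup S] [Fintype S] [Fintype Q]
    (act : Q → S → Q)
    (hact : ∀ q s t, act (act q s) t = act q (s * t))
    (hid : ∀ e f a u b : S, e * e = e → f * f = f →
      e * a * f * u * e * b * f = e * b * f * u * e * a * f)
    (hcond1 : ∀ (x y : Q) (j : S), j * j = j → act x j = x → act y j = y →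
      (x = y ∨ ∃ s, act x s = y) → (y = x ∨ ∃ s, act y s = x) → x = y)
    (p r₁ r₂ : Q) (e₁ e₂ : S)
    (he1 : e₁ * e₁ = e₁) (he2 : e₂ * e₂ = e₂)
    (hpe1 : act p e₁ = p) (hr1e1 : act r₁ e₁ = r₁)
    (hpe2 : act p e₂ = p) (hr2e2 : act r₂ e₂ = r₂)
    (h12 : r₁ = r₂ ∨ ∃ s, act r₁ s = r₂)
    (h21 : r₂ = r₁ ∨ ∃ s, act r₂ s = r₁)
    (hpr1 : p = r₁ ∨ ∃ s, act p s = r₁) :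
    act r₁ e₂ = r₂ :=
  stmt4_general act hact hid hcond1 p r₁ r₂ e₁ e₂ he1 he2 hpe1 hr1e1 hpe2 hr2e2 h12 h21 hpr1
end

section
/- Let S be a finite semigroup acting faithfully on the right on a finite set Q. Suppose that for every x ∈ Q, every idempotent j ∈ S, and every y ∈ Q with x·j = x, y·j = y, if x and y are mutually reachable under the action then x = y. Then S is aperiodic: for every s ∈ S there exists n ≥ 1 with s^n = s^{n+1}. -/
section spow

variable {S : Type*} [Semigroup S]

theorem spow_add_eq_spow_add_of_eq {s : S} {m n : ℕ} (h : spow s m = spow s n) (d : ℕ) :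
    spow s (m + d) = spow s (n + d) := by
  induction d with
  | zero => exact h
  | succ d ih => exact congrArg (· * s) ih

theorem spow_mul_spow (s : S) (m n : ℕ) : spow s m * spow s n = spow s (m + n + 1) := by
  induction n with
  | zero => rfl
  | succ n ih => rw [spow, ← mul_assoc, ih]; rfl

theorem spow_succ' (s : S) (n : ℕ) : spow s (n + 1) = s * spow s n := by
  have h := spow_mul_spow s 0 n
  rw [zero_add] at h
  exact h.symm

theorem spow_add_mul_eq_of_eq {s : S} {a p : ℕ} (h : spow s a = spow s (a + p)) (j : ℕ) :
    spow s (a + j * p) = spow s a := by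
  induction j with
  | zero => rw [zero_mul, add_zero]
  | succ j ih =>
    calc spow s (a + (j + 1) * p) = spow s (a + p + j * p) := by congr 1; ring
      _ = spow s (a + j * p) := (spow_add_eq_spow_add_of_eq h (j * p)).symm
      _ = spow s a := ih

theorem exists_isIdempotentElem_spow [Finite S] (s : S) : ∃ k, IsIdempotentElem (spow s k) := by
  obtain ⟨a, b, hab, hperiod⟩ := Set.Finite.exists_lt_map_eq_of_forall_mem (f := spow s)
    (fun _ => Set.mem_univ _) Set.finite_univ
  obtain ⟨c, rfl⟩ := Nat.exists_eq_add_of_lt hab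
  -- `s^(k+1)` with `k + 1 = (a + 1) * (c + 1)`: a multiple of the period `c + 1` past the preperiod
  refine ⟨a + c * (a + 1), ?_⟩
  calc spow s (a + c * (a + 1)) * spow s (a + c * (a + 1))
      = spow s (a + (a + 1) * (c + 1) + c * (a + 1)) := by rw [spow_mul_spow]; congr 1; ring
    _ = spow s (a + c * (a + 1)) := by
      rw [spow_add_eq_spow_add_of_eq (spow_add_mul_eq_of_eq hperiod (a + 1))]

end spow

theorem idempotent_mul_eq_self_of_faithful {S Q : Type*} [Semigroup S] (act : Q → S → Q)
    (hact : ∀ q s t, act (act q s) t = act q (s * t))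
    (hfaithful : ∀ s t : S, (∀ q, act q s = act q t) → s = t)
    (hcond1 : ∀ (x y : Q) (j : S), j * j = j → act x j = x → act y j = y →
      (x = y ∨ ∃ w, act x w = y) → (y = x ∨ ∃ w, act y w = x) → x = y)
    {e s w : S} (he : IsIdempotentElem e) (hcomm : s * e = e * s) (hw : e * s * w = e) :
    e * s = e := by
  refine (hfaithful _ _ fun q => hcond1 (act q e) (act q (e * s)) e he ?_ ?_ ?_ ?_).symm
  · rw [hact, he.eq]
  · rw [hact, mul_assoc, hcomm, ← mul_assoc, he.eq]
  · exact Or.inr ⟨s, hact q e s⟩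
  · exact Or.inr ⟨w, by rw [hact, hw]⟩

theorem stmt6_general {S Q : Type*} [Semigroup S] [Fintype S]
    (act : Q → S → Q)
    (hact : ∀ q s t, act (act q s) t = act q (s * t))
    (hfaithful : ∀ s t : S, (∀ q, act q s = act q t) → s = t)
    (hcond1 : ∀ (x y : Q) (j : S), j * j = j → act x j = x → act y j = y →
      (x = y ∨ ∃ w, act x w = y) → (y = x ∨ ∃ w, act y w = x) → x = y) :
    ∀ s : S, ∃ n : ℕ, spow s n = spow s (n + 1) := by
  intro s
  obtain ⟨k, he⟩ := exists_isIdempotentElem_spow s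
  have hcomm : s * spow s k = spow s k * s := (spow_succ' s k).symm
  have hw : spow s k * s * spow s (k + k) = spow s k := by
    calc spow s (k + 1) * spow s (k + k) = spow s k * spow s k * spow s k := by
          simp only [spow_mul_spow]; congr 1; omega
      _ = spow s k := by rw [he.eq, he.eq]
  exact ⟨k, (idempotent_mul_eq_self_of_faithful act hact hfaithful hcond1 he hcomm hw).symm⟩

theorem stmt6 {S Q : Type*} [Semigroup S] [Fintype S] [Fintype Q]
    (act : Q → S → Q)
    (hact : ∀ q s t, act (act q s) t = act q (s * t))
    (hfaithful : ∀ s t : S, (∀ q, act q s = act q t) → s = t)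
    (hcond1 : ∀ (x y : Q) (j : S), j * j = j → act x j = x → act y j = y →
      (x = y ∨ ∃ w, act x w = y) → (y = x ∨ ∃ w, act y w = x) → x = y) :
    ∀ s : S, ∃ n : ℕ, spow s n = spow s (n + 1) :=
  stmt6_general act hact hfaithful hcond1
end

section
/- Let S be a finite semigroup satisfying eafuebf = ebfueaf for all idempotents e, f and elements a, u, b, acting on the right on a set Q. Suppose p, q, r, r₁, r₂, q₁ ∈ Q, idempotents e, f ∈ S, and elements a, b, u₁, u₂ ∈ S satisfy: p·e = p; q·f = q and r·f = r; p·a = q and p·b = r; q·u₁ = q₁, r·u₁ = r₁, q·u₂ = q₁, r·u₂ = r₂. Then r₁·(e·a·f) = r₂·(e·a·f). -/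
/-! Writing `s = eaf` and `t = ebf`, we have `q = p·s`, `r = p·t`, and the identity
`t u s = s u t` lets us move each `rᵢ·s = p·t uᵢ s` over to `p·s uᵢ t = q₁·t`,
which no longer depends on `i`. -/

theorem act_mul_mul_of_fixed {S Q : Type*} [Semigroup S] (act : Q → S → Q)
    (hact : ∀ q s t, act (act q s) t = act q (s * t))
    {p q : Q} {e a f : S} (hpe : act p e = p) (hpa : act p a = q) (hqf : act q f = q) :
    act p (e * a * f) = q := by
  rw [← hact, ← hact, hpe, hpa, hqf]

theorem act_act_act_swap {S Q : Type*} [Semigroup S] (act : Q → S → Q)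
    (hact : ∀ q s t, act (act q s) t = act q (s * t))
    (p : Q) {s t u : S} (h : t * u * s = s * u * t) :
    act (act (act p t) u) s = act (act (act p s) u) t := by
  rw [hact, hact, hact, hact, ← mul_assoc, ← mul_assoc, h]

theorem stmt9_general {S Q : Type*} [Semigroup S]
    (act : Q → S → Q)
    (hact : ∀ q s t, act (act q s) t = act q (s * t))
    (hid : ∀ e f a u b : S, e * e = e → f * f = f →
      e * a * f * u * e * b * f = e * b * f * u * e * a * f)
    (p q r r₁ r₂ q₁ : Q) (e f a b u₁ u₂ : S)
    (he : e * e = e) (hf : f * f = f)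
    (hpe : act p e = p)
    (hqf : act q f = q) (hrf : act r f = r)
    (hpa : act p a = q) (hpb : act p b = r)
    (hqu1 : act q u₁ = q₁) (hru1 : act r u₁ = r₁)
    (hqu2 : act q u₂ = q₁) (hru2 : act r u₂ = r₂) :
    act r₁ (e * a * f) = act r₂ (e * a * f) := by
  have hq : act p (e * a * f) = q := act_mul_mul_of_fixed act hact hpe hpa hqf
  have hr : act p (e * b * f) = r := act_mul_mul_of_fixed act hact hpe hpb hrf
  have swap : ∀ u, e * b * f * u * (e * a * f) = e * a * f * u * (e * b * f) := fun u => by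
    simpa only [mul_assoc] using hid e f b u a he hf
  calc act r₁ (e * a * f)
      = act q₁ (e * b * f) := by
        rw [← hru1, ← hr, act_act_act_swap act hact p (swap u₁), hq, hqu1]
    _ = act r₂ (e * a * f) := by
        rw [← hru2, ← hr, act_act_act_swap act hact p (swap u₂), hq, hqu2]

theorem stmt9 {S Q : Type*} [Semigroup S] [Fintype S]
    (act : Q → S → Q)
    (hact : ∀ q s t, act (act q s) t = act q (s * t))
    (hid : ∀ e f a u b : S, e * e = e → f * f = f →
      e * a * f * u * e * b * f = e * b * f * u * e * a * f)
    (p q r r₁ r₂ q₁ : Q) (e f a b u₁ u₂ : S)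
    (he : e * e = e) (hf : f * f = f)
    (hpe : act p e = p)
    (hqf : act q f = q) (hrf : act r f = r)
    (hpa : act p a = q) (hpb : act p b = r)
    (hqu1 : act q u₁ = q₁) (hru1 : act r u₁ = r₁)
    (hqu2 : act q u₂ = q₁) (hru2 : act r u₂ = r₂) :
    act r₁ (e * a * f) = act r₂ (e * a * f) :=
  stmt9_general act hact hid p q r r₁ r₂ q₁ e f a b u₁ u₂ he hf hpe hqf hrf hpa hpb hqu1 hru1 hqu2
    hru2
end
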